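/- Every finite graph G has an lcw expression using at most lcw(G) + 1 labels in which one label is reserved as an insertion label: every vertex is inserted with this reserved label and is immediately connected to all of its neighbors that have already been inserted (by edge operations followed by a relabeling) before any further vertex is inserted. -/

import Mathlib

/-! ## Common definitions

Linear clique-width (lcw) expressions and derived notions, following
Brignall–Lozin–Stacho, "Bichain graphs: geometric model and universal graphs" /
"Linear clique-width of subclasses of cographs".

An lcw expression over a label alphabet `L` is a list of operations:
insert a new vertex with a given label, add all edges between two distinct
label classes, or relabel one label class to another.  Vertices are indexed
by the natural numbers `0, 1, 2, …` in order of insertion. -/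

/-- The three kinds of operations of an lcw expression. -/
inductive LcwOp (L : Type) where
  | insert : L → LcwOp L
  | join : L → L → LcwOp L
  | relabel : L → L → LcwOp L

/-- The state while executing an lcw expression: the number `n` of vertices
inserted so far (the vertices are `0, …, n-1`), the adjacency relation built
so far, and the current labeling (`none` for indices not yet inserted). -/
structure LcwState (L : Type) where
  n : ℕ
  adj : ℕ → ℕ → Prop
  lab : ℕ → Option L

/-- The initial, empty state. -/
def LcwState.init (L : Type) : LcwState L :=
  ⟨0, fun _ _ => False, fun _ => none⟩

/-- Executing one operation. -/
def LcwState.step {L : Type} [DecidableEq L] (s : LcwState L) : LcwOp L → LcwState L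
  | .insert a => ⟨s.n + 1, s.adj, fun v => if v = s.n then some a else s.lab v⟩
  | .join i j =>
      ⟨s.n,
       fun u v => s.adj u v ∨
         (u ≠ v ∧ ((s.lab u = some i ∧ s.lab v = some j) ∨
                   (s.lab u = some j ∧ s.lab v = some i))),
       s.lab⟩
  | .relabel i j => ⟨s.n, s.adj, fun v => if s.lab v = some i then some j else s.lab v⟩

/-- Executing an lcw expression (a list of operations) from the empty state. -/
def runLcw {L : Type} [DecidableEq L] (e : List (LcwOp L)) : LcwState L :=
  e.foldl LcwState.step (LcwState.init L)

/-- Well-formedness: every edge-adding operation uses two distinct labels. -/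
def WfExpr {L : Type} (e : List (LcwOp L)) : Prop :=
  ∀ op ∈ e, ∀ i j : L, op = LcwOp.join i j → i ≠ j

/-- The expression `e` builds the graph `G`, where the bijection
`f` sends each vertex of `G` to its insertion index (so `f` records the
insertion order of the vertices). -/
def BuildsVia {L V : Type} [DecidableEq L] [Fintype V] (e : List (LcwOp L))
    (G : SimpleGraph V) (f : V → ℕ) : Prop :=
  WfExpr e ∧ Function.Injective f ∧ (runLcw e).n = Fintype.card V ∧
    (∀ v, f v < (runLcw e).n) ∧ ∀ u v, G.Adj u v ↔ (runLcw e).adj (f u) (f v)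

/-- The expression `e` builds the graph `G`. -/
def Builds {L V : Type} [DecidableEq L] [Fintype V] (e : List (LcwOp L))
    (G : SimpleGraph V) : Prop :=
  ∃ f : V → ℕ, BuildsVia e G f

/-- The linear clique-width of a finite graph: the least size of a label
alphabet over which some lcw expression builds `G`.  (An expression over
`Fin k` is an expression using `k` labels; an *efficient* expression for `G`
is one over `Fin (lcw G)`.) -/
noncomputable def lcw {V : Type} [Fintype V] (G : SimpleGraph V) : ℕ :=
  sInf {k : ℕ | ∃ e : List (LcwOp (Fin k)), Builds e G}

/-- `ℓ` is a sink label of the expression `e`: it is never used in an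
edge-adding operation and vertices labeled `ℓ` are never relabeled. -/
def SinkLabel {L : Type} (e : List (LcwOp L)) (ℓ : L) : Prop :=
  (∀ op ∈ e, ∀ i j : L, op = LcwOp.join i j → i ≠ ℓ ∧ j ≠ ℓ) ∧
  (∀ op ∈ e, ∀ j : L, op = LcwOp.relabel ℓ j → j = ℓ)

/-- An expression is sink-free if no label is a sink label. -/
def SinkFree {L : Type} (e : List (LcwOp L)) : Prop :=
  ∀ ℓ : L, ¬ SinkLabel e ℓ

/-- The disjoint union of two graphs. -/
def GraphDisjUnion {V W : Type} (G : SimpleGraph V) (H : SimpleGraph W) :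
    SimpleGraph (V ⊕ W) where
  Adj x y :=
    match x, y with
    | Sum.inl a, Sum.inl b => G.Adj a b
    | Sum.inr a, Sum.inr b => H.Adj a b
    | _, _ => False
  symm := ⟨by
    rintro (a | a) (b | b) h
    · exact G.adj_symm h
    · exact h.elim
    · exact h.elim
    · exact H.adj_symm h⟩
  loopless := ⟨by
    rintro (a | a) h
    · exact G.irrefl h
    · exact H.irrefl h⟩

/-- The join of two graphs: their disjoint union together with all edges
between the two sides. -/
def GraphJoin {V W : Type} (G : SimpleGraph V) (H : SimpleGraph W) :
    SimpleGraph (V ⊕ W) :=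
  (GraphDisjUnion Gᶜ Hᶜ)ᶜ

/-- `H` is (isomorphic to) an induced subgraph of `G`. -/
def InducedSubgraphOf {W V : Type} (H : SimpleGraph W) (G : SimpleGraph V) : Prop :=
  ∃ f : W ↪ V, ∀ a b : W, H.Adj a b ↔ G.Adj (f a) (f b)

/-- The path `P₄` on four vertices (edges 01, 12, 23). -/
def pathP4 : SimpleGraph (Fin 4) :=
  SimpleGraph.fromRel (fun a b => (b : ℕ) = (a : ℕ) + 1)

/-- The cycle `C₄` on four vertices (edges 01, 12, 23, 30). -/
def cycleC4 : SimpleGraph (Fin 4) :=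
  SimpleGraph.fromRel (fun a b => (b : ℕ) = (a : ℕ) + 1 ∨ ((a : ℕ) = 3 ∧ (b : ℕ) = 0))

/-- The graph `2K₂` (edges 01 and 23). -/
def twoK2 : SimpleGraph (Fin 4) :=
  SimpleGraph.fromRel (fun a b => ((a : ℕ) = 0 ∧ (b : ℕ) = 1) ∨ ((a : ℕ) = 2 ∧ (b : ℕ) = 3))

/-- Cographs: the graphs with no induced `P₄`. -/
def IsCograph {V : Type} (G : SimpleGraph V) : Prop :=
  ¬ InducedSubgraphOf pathP4 G

/-- Quasi-threshold (trivially perfect) graphs: no induced `P₄` and no induced `C₄`. -/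
def IsQuasiThreshold {V : Type} (G : SimpleGraph V) : Prop :=
  ¬ InducedSubgraphOf pathP4 G ∧ ¬ InducedSubgraphOf cycleC4 G

/-- Threshold graphs: no induced `P₄`, `C₄` or `2K₂`. -/
def IsThreshold {V : Type} (G : SimpleGraph V) : Prop :=
  ¬ InducedSubgraphOf pathP4 G ∧ ¬ InducedSubgraphOf cycleC4 G ∧ ¬ InducedSubgraphOf twoK2 G

/-- A finite graph, encoded with vertex set `Fin n`.  A *class* of graphs,
i.e. a set of finite graphs closed under isomorphism, is modelled as a
hereditary set of `FinGraph`s (hereditary sets are automatically closed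
under isomorphism). -/
def FinGraph : Type := Σ n : ℕ, SimpleGraph (Fin n)

/-- The complement of a finite graph. -/
def FinGraph.compl (G : FinGraph) : FinGraph := ⟨G.1, G.2ᶜ⟩

/-- The induced-subgraph order on finite graphs. -/
def IndF (H G : FinGraph) : Prop := InducedSubgraphOf H.2 G.2

/-- A set of finite graphs is hereditary if it is closed downward under the
induced subgraph order (in particular it is closed under isomorphism). -/
def Hereditary (C : Set FinGraph) : Prop :=
  ∀ G ∈ C, ∀ H : FinGraph, IndF H G → H ∈ C

/-- The finite graph `K` is isomorphic to the graph `G`. -/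
def IsoTo {V : Type} (K : FinGraph) (G : SimpleGraph V) : Prop :=
  ∃ e : Fin K.1 ≃ V, ∀ a b, K.2.Adj a b ↔ G.Adj (e a) (e b)

/-- The class `C` contains (a copy of) the graph `G`. -/
def MemUpToIso (C : Set FinGraph) {V : Type} (G : SimpleGraph V) : Prop :=
  ∃ K ∈ C, IsoTo K G

/-- `C` is closed under disjoint unions. -/
def ClosedUnderDisjointUnions (C : Set FinGraph) : Prop :=
  ∀ G ∈ C, ∀ H ∈ C, MemUpToIso C (GraphDisjUnion (Sigma.snd G) (Sigma.snd H))

/-- `C` is closed under joins. -/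
def ClosedUnderJoins (C : Set FinGraph) : Prop :=
  ∀ G ∈ C, ∀ H ∈ C, MemUpToIso C (GraphJoin (Sigma.snd G) (Sigma.snd H))

/-- `C` is atomic: it cannot be written as the union of two proper
hereditary subclasses. -/
def AtomicClass (C : Set FinGraph) : Prop :=
  ¬ ∃ D₁ D₂ : Set FinGraph, Hereditary D₁ ∧ Hereditary D₂ ∧
      D₁ ⊂ C ∧ D₂ ⊂ C ∧ C = D₁ ∪ D₂

/-- The inflation `G[H₁, …, Hₙ]` of a graph `G` on `Fin n` by graphs
`H i` (`i : Fin n`): substitute `H i` for the vertex `i` of `G`. -/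
def inflate {n : ℕ} (G : SimpleGraph (Fin n)) (m : Fin n → ℕ)
    (H : ∀ i : Fin n, SimpleGraph (Fin (m i))) :
    SimpleGraph (Σ i : Fin n, Fin (m i)) where
  Adj x y := (x.1 ≠ y.1 ∧ G.Adj x.1 y.1) ∨ ∃ h : x.1 = y.1, (H y.1).Adj (h ▸ x.2) y.2
  symm := ⟨by
    rintro ⟨i, a⟩ ⟨j, b⟩ (⟨hne, hadj⟩ | ⟨h, hadj⟩)
    · exact Or.inl ⟨hne.symm, G.adj_symm hadj⟩
    · cases h
      exact Or.inr ⟨rfl, (H i).adj_symm hadj⟩⟩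
  loopless := ⟨by
    rintro ⟨i, a⟩ (⟨hne, _⟩ | ⟨h, hadj⟩)
    · exact hne rfl
    · exact (H i).irrefl hadj⟩

/-- The inflation `C[D]` of the class `C` by the class `D`: all graphs
isomorphic to an inflation of a graph of `C` by graphs of `D`. -/
def classInflate (C D : Set FinGraph) : Set FinGraph :=
  {K | ∃ (n : ℕ) (G : SimpleGraph (Fin n)) (m : Fin n → ℕ)
        (H : ∀ i : Fin n, SimpleGraph (Fin (m i))),
      (⟨n, G⟩ : FinGraph) ∈ C ∧ (∀ i, (⟨m i, H i⟩ : FinGraph) ∈ D) ∧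
      IsoTo K (inflate G m H)}

/-- The class of threshold graphs (as finite graphs). -/
def thresholdClass : Set FinGraph := {G : FinGraph | IsThreshold G.2}

/-- Vertex types of the sequence witnessing unbounded linear clique-width:
`qtV 0` carries `G₁ = K₂` and `qtV (k+1)` carries
`G_{k+2} = K₁ ∗ ((G_{k+1} ∪ G_{k+1}) ∪ (G_{k+1} ∪ G_{k+1}))`. -/
def qtV : ℕ → Type
  | 0 => Fin 2
  | k + 1 => Unit ⊕ ((qtV k ⊕ qtV k) ⊕ (qtV k ⊕ qtV k))

instance qtVFintype : ∀ k : ℕ, Fintype (qtV k)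
  | 0 => inferInstanceAs (Fintype (Fin 2))
  | k + 1 =>
      letI := qtVFintype k
      inferInstanceAs (Fintype (Unit ⊕ ((qtV k ⊕ qtV k) ⊕ (qtV k ⊕ qtV k))))

/-- The graphs `G₁, G₂, …` of the paper, reindexed so that `qtG k = G_{k+1}`:
`qtG 0 = K₂` and `qtG (k+1) = K₁ ∗ ((qtG k ∪ qtG k) ∪ (qtG k ∪ qtG k))`. -/
def qtG : ∀ k : ℕ, SimpleGraph (qtV k)
  | 0 => (⊤ : SimpleGraph (Fin 2))
  | k + 1 =>
      GraphJoin (⊥ : SimpleGraph Unit)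
        (GraphDisjUnion (GraphDisjUnion (qtG k) (qtG k)) (GraphDisjUnion (qtG k) (qtG k)))

/-! Take an expression `e₀` over `lcw G` labels and add a fresh label `ℓ`. Replace each
insertion `insert a` of `e₀` by: insert the vertex with label `ℓ`, join `ℓ` to every label class
containing a `G`-neighbour of the new vertex, relabel `ℓ` to `a`; drop the joins of `e₀` and keep
its relabelings. This builds `G` because vertices sharing a label when a vertex is inserted are
treated alike by every later operation of `e₀`, so either all or none of them end up adjacent to
it: joining whole label classes creates exactly its edges to earlier vertices. -/

namespace LcwState

variable {L : Type} [DecidableEq L]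

theorem foldl_induction (P : LcwState L → Prop) (h : ∀ s op, P s → P (s.step op)) :
    ∀ (q : List (LcwOp L)) (s : LcwState L), P s → P (q.foldl step s)
  | [], _, hs => hs
  | op :: q, s, hs => foldl_induction P h q (s.step op) (h s op hs)

theorem n_le_foldl (q : List (LcwOp L)) (s : LcwState L) : s.n ≤ (q.foldl step s).n :=
  foldl_induction (fun t => s.n ≤ t.n) (fun t op ht => by cases op <;> simp [step] <;> omega)
    q s le_rfl

theorem n_runLcw_take_le (e : List (LcwOp L)) (t : ℕ) :
    (runLcw (e.take t)).n ≤ (runLcw e).n := by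
  conv_rhs => rw [← List.take_append_drop t e, runLcw, List.foldl_append]
  exact n_le_foldl _ _

structure WellFormed (s : LcwState L) : Prop where
  isSome_lab_iff : ∀ x, (s.lab x).isSome ↔ x < s.n
  lt_of_adj : ∀ {x y}, s.adj x y → x < s.n
  adj_symm : ∀ {x y}, s.adj x y → s.adj y x

omit [DecidableEq L] in
theorem WellFormed.lab_eq_none {s : LcwState L} (hs : s.WellFormed) {x : ℕ} (hx : s.n ≤ x) :
    s.lab x = none := by
  simpa [← Option.not_isSome_iff_eq_none, hs.isSome_lab_iff] using hx

theorem WellFormed.step {s : LcwState L} (hs : s.WellFormed) (op : LcwOp L) :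
    (s.step op).WellFormed := by
  cases op with
  | insert a =>
    refine ⟨fun x => ?_, fun h => Nat.lt_succ_of_lt (hs.lt_of_adj h), hs.adj_symm⟩
    by_cases hx : x = s.n
    · simp [LcwState.step, hx]
    · simp only [LcwState.step, if_neg hx, hs.isSome_lab_iff]
      omega
  | join i j =>
    refine ⟨hs.isSome_lab_iff, fun {x y} h => ?_, fun {x y} h => ?_⟩
    · rcases h with h | ⟨-, ⟨hx, -⟩ | ⟨hx, -⟩⟩
      · exact hs.lt_of_adj h
      all_goals exact (hs.isSome_lab_iff x).1 (by simp [hx])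
    · rcases h with h | ⟨hne, h⟩
      · exact Or.inl (hs.adj_symm h)
      · exact Or.inr ⟨hne.symm, h.symm.imp And.symm And.symm⟩
  | relabel i j =>
    refine ⟨fun x => ?_, hs.lt_of_adj, hs.adj_symm⟩
    simp only [LcwState.step, ← hs.isSome_lab_iff]
    split_ifs with h <;> simp [h]

omit [DecidableEq L] in
theorem wellFormed_init : (init L).WellFormed :=
  ⟨fun _ => by simp [init], fun h => h.elim, fun h => h.elim⟩

theorem wellFormed_runLcw (e : List (LcwOp L)) : (runLcw e).WellFormed :=
  foldl_induction _ (fun _ op hs => hs.step op) e _ wellFormed_init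

theorem foldl_adj_iff_of_lab_eq {s : LcwState L} (hs : s.WellFormed) (q : List (LcwOp L))
    {u w : ℕ} (hu : u < s.n) (hw : w < s.n) (hl : s.lab u = s.lab w) :
    (q.foldl step s).adj u s.n ↔ (q.foldl step s).adj w s.n := by
  have hnew : ∀ x, ¬ s.adj x s.n := fun x h => (hs.lt_of_adj (hs.adj_symm h)).false
  refine (foldl_induction (fun t => u < t.n ∧ w < t.n ∧ t.lab u = t.lab w ∧
    (t.adj u s.n ↔ t.adj w s.n)) (fun t op ⟨hut, hwt, hlt, hadj⟩ => ?_) q s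
    ⟨hu, hw, hl, iff_of_false (hnew u) (hnew w)⟩).2.2.2
  cases op with
  | insert a =>
    simp only [LcwState.step, if_neg hut.ne, if_neg hwt.ne]
    exact ⟨by omega, by omega, hlt, hadj⟩
  | join i j =>
    refine ⟨hut, hwt, hlt, ?_⟩
    simp only [LcwState.step, hlt, ne_eq, hu.ne, hw.ne, not_false_eq_true, true_and]
    exact or_congr_left hadj
  | relabel i j => exact ⟨hut, hwt, by simp only [LcwState.step, hlt], hadj⟩

theorem foldl_join {β : Type} (l : List β) (i j : β → L) (s : LcwState L) :
    (l.map fun b => LcwOp.join (i b) (j b)).foldl step s =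
      ⟨s.n, fun x y => s.adj x y ∨ x ≠ y ∧ ∃ b ∈ l,
        (s.lab x = some (i b) ∧ s.lab y = some (j b)) ∨
          (s.lab x = some (j b) ∧ s.lab y = some (i b)), s.lab⟩ := by
  induction l generalizing s with
  | nil => simp
  | cons b l ih =>
    simp only [List.map_cons, List.foldl_cons, ih, LcwState.step, List.mem_cons,
      exists_eq_or_imp, mk.injEq, true_and, and_true]
    funext x y
    simp only [and_or_left, or_assoc]

theorem foldl_insert (l : List L) :
    (l.map LcwOp.insert).foldl step (init L) = ⟨l.length, fun _ _ => False, fun x => l[x]?⟩ := by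
  induction l using List.reverseRecOn with
  | nil => rfl
  | append_singleton l a ih =>
    simp only [List.map_append, List.foldl_append, ih, List.map_cons, List.map_nil,
      List.foldl_cons, List.foldl_nil, LcwState.step, List.length_append, List.length_singleton,
      mk.injEq, true_and]
    funext x
    rcases lt_trichotomy x l.length with hx | rfl | hx
    · simp [hx.ne, List.getElem?_append_left hx]
    · simp
    · simp [hx.ne', List.getElem?_eq_none (by omega : l.length ≤ x),
        List.getElem?_eq_none (by simp; omega : (l ++ [a]).length ≤ x)]

end LcwState

theorem exists_builds_card {V : Type} [Fintype V] (G : SimpleGraph V) :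
    ∃ e : List (LcwOp (Fin (Fintype.card V))), Builds e G := by
  classical
  set N := Fintype.card V
  set σ := Fintype.equivFin V
  set P := (Finset.univ.filter fun p : Fin N × Fin N => G.Adj (σ.symm p.1) (σ.symm p.2)).toList
  have hP : ∀ i j : Fin N, (i, j) ∈ P ↔ G.Adj (σ.symm i) (σ.symm j) := by simp [P]
  set e := (List.finRange N).map LcwOp.insert ++ P.map fun p => LcwOp.join p.1 p.2
  have hrun : runLcw e = ⟨N, fun x y => x ≠ y ∧ ∃ p ∈ P,
      ((List.finRange N)[x]? = some p.1 ∧ (List.finRange N)[y]? = some p.2) ∨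
        ((List.finRange N)[x]? = some p.2 ∧ (List.finRange N)[y]? = some p.1),
      fun x => (List.finRange N)[x]?⟩ := by
    simp [e, runLcw, LcwState.foldl_insert, LcwState.foldl_join]
  refine ⟨e, fun v => σ v, ?_, fun u v h => σ.injective (Fin.ext h), by simp [hrun, N],
    fun v => hrun ▸ (σ v).isLt, fun u v => ?_⟩
  · rintro op hop i j rfl
    simp only [e, List.mem_append, List.mem_map, List.mem_finRange, true_and,
      reduceCtorEq, exists_false, false_or] at hop
    obtain ⟨⟨i, j⟩, hij, he⟩ := hop
    cases he
    exact fun h => G.ne_of_adj ((hP i j).1 hij) (congrArg σ.symm h)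
  · have hlab : ∀ i : Fin N, (List.finRange N)[(i : ℕ)]? = some i := by simp
    simp only [hrun, hlab, Option.some_inj]
    constructor
    · intro h
      exact ⟨fun hc => G.ne_of_adj h (σ.injective (Fin.ext hc)), (σ u, σ v), by simpa [hP],
        Or.inl ⟨rfl, rfl⟩⟩
    · rintro ⟨-, ⟨i, j⟩, hij, ⟨rfl, rfl⟩ | ⟨rfl, rfl⟩⟩
      · simpa using (hP _ _).1 hij
      · simpa using ((hP _ _).1 hij).symm

section AtInsertions

open LcwState

variable {L : Type} [DecidableEq L] (P : LcwState L → Prop)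

def AtInsertions (e : List (LcwOp L)) (s : LcwState L) : Prop :=
  ∀ t a, e[t]? = some (LcwOp.insert a) → P ((e.take t).foldl step s)

variable {P}

theorem atInsertions_of_forall_ne_insert {e : List (LcwOp L)} (s : LcwState L)
    (h : ∀ a, LcwOp.insert a ∉ e) : AtInsertions P e s :=
  fun _ a he => (h a (List.mem_of_getElem? he)).elim

theorem AtInsertions.cons {op : LcwOp L} {e : List (LcwOp L)} {s : LcwState L}
    (hop : ∀ a, op = .insert a → P s) (h : AtInsertions P e (s.step op)) :
    AtInsertions P (op :: e) s
  | 0, a, he => hop a (by simpa using he)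
  | t + 1, a, he => h t a (by simpa using he)

theorem AtInsertions.append {e₁ e₂ : List (LcwOp L)} {s : LcwState L}
    (h₁ : AtInsertions P e₁ s) (h₂ : AtInsertions P e₂ (e₁.foldl step s)) :
    AtInsertions P (e₁ ++ e₂) s := by
  intro t a he
  rcases lt_or_ge t e₁.length with ht | ht
  · rw [List.getElem?_append_left ht] at he
    simpa [List.take_append, List.take_eq_nil_of_eq_nil, Nat.sub_eq_zero_of_le ht.le]
      using h₁ t a he
  · rw [List.getElem?_append_right ht] at he
    simpa [List.take_append, List.take_of_length_le ht] using h₂ _ a he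

end AtInsertions

section InsertionForm

open LcwState

variable {k : ℕ} (A : ℕ → ℕ → Prop)

def AdjToNext (s : LcwState (Fin k)) (b : Fin k) : Prop :=
  ∃ u < s.n, s.lab u = some b ∧ A u s.n

noncomputable def insertionBlock (s : LcwState (Fin k)) (a : Fin k) :
    List (LcwOp (Fin (k + 1))) :=
  open Classical in
  LcwOp.insert (Fin.last k) ::
    ((List.finRange k).filter fun b => AdjToNext A s b).map
      (fun b => LcwOp.join (Fin.last k) b.castSucc) ++
    [LcwOp.relabel (Fin.last k) a.castSucc]

/-- The state argument is the state reached so far by the original expression. -/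
noncomputable def toInsertionForm :
    LcwState (Fin k) → List (LcwOp (Fin k)) → List (LcwOp (Fin (k + 1)))
  | _, [] => []
  | s, .insert a :: e => insertionBlock A s a ++ toInsertionForm (s.step (.insert a)) e
  | s, .join i j :: e => toInsertionForm (s.step (.join i j)) e
  | s, .relabel i j :: e =>
      .relabel i.castSucc j.castSucc :: toInsertionForm (s.step (.relabel i j)) e

structure Tracks (s : LcwState (Fin k)) (s' : LcwState (Fin (k + 1))) : Prop where
  n_eq : s'.n = s.n
  lab_eq : ∀ x, s'.lab x = (s.lab x).map Fin.castSucc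
  adj_iff : ∀ x y, s'.adj x y ↔ x < s.n ∧ y < s.n ∧ x ≠ y ∧ A x y

variable {A}

theorem tracks_init : Tracks A (init (Fin k)) (init (Fin (k + 1))) :=
  ⟨rfl, fun _ => rfl, fun x y => by simp [init]⟩

theorem Tracks.lab_ne_last {s : LcwState (Fin k)} {s' : LcwState (Fin (k + 1))}
    (h : Tracks A s s') (x : ℕ) : s'.lab x ≠ some (Fin.last k) := by
  rw [h.lab_eq]
  cases s.lab x <;> simp [Fin.castSucc_ne_last]

theorem Tracks.adj_iff_adj {s₁ s₂ : LcwState (Fin k)} {s₁' s₂' : LcwState (Fin (k + 1))}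
    (h₁ : Tracks A s₁ s₁') (h₂ : Tracks A s₂ s₂') (hn : s₁'.n ≤ s₂'.n) {u v : ℕ}
    (hu : u < s₁'.n) (hv : v < s₁'.n) : s₁'.adj u v ↔ s₂'.adj u v := by
  rw [h₁.n_eq] at hu hv
  rw [h₁.n_eq, h₂.n_eq] at hn
  simp [h₁.adj_iff, h₂.adj_iff, hu, hv, hu.trans_le hn, hv.trans_le hn]

theorem Tracks.step_relabel {s : LcwState (Fin k)} {s' : LcwState (Fin (k + 1))}
    (h : Tracks A s s') (i j : Fin k) :
    Tracks A (s.step (.relabel i j)) (s'.step (.relabel i.castSucc j.castSucc)) := by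
  refine ⟨h.n_eq, fun x => ?_, h.adj_iff⟩
  simp only [LcwState.step, h.lab_eq]
  cases s.lab x <;> simp [apply_ite (Option.map Fin.castSucc)]

theorem exists_adjToNext_and_lab_eq_iff {s : LcwState (Fin k)} (hs : s.WellFormed)
    (htwin : ∀ u w, u < s.n → w < s.n → s.lab u = s.lab w → A u s.n → A w s.n) (y : ℕ) :
    (∃ b, AdjToNext A s b ∧ s.lab y = some b) ↔ y < s.n ∧ A y s.n := by
  refine ⟨fun ⟨b, ⟨u, hu, hub, huA⟩, hyb⟩ => ?_, fun ⟨hy, hyA⟩ => ?_⟩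
  · have hy : y < s.n := (hs.isSome_lab_iff y).1 (by simp [hyb])
    exact ⟨hy, htwin u y hu hy (hub.trans hyb.symm) huA⟩
  · obtain ⟨b, hb⟩ := Option.isSome_iff_exists.1 ((hs.isSome_lab_iff y).2 hy)
    exact ⟨b, ⟨y, hy, hb, hyA⟩, hb⟩

theorem Tracks.step_insertionBlock {s : LcwState (Fin k)} {s' : LcwState (Fin (k + 1))}
    (hs : s.WellFormed) (hA : ∀ x y, A x y → A y x)
    (htwin : ∀ u w, u < s.n → w < s.n → s.lab u = s.lab w → A u s.n → A w s.n)
    (h : Tracks A s s') (a : Fin k) :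
    Tracks A (s.step (.insert a)) ((insertionBlock A s a).foldl step s') := by
  classical
  have hclass := exists_adjToNext_and_lab_eq_iff hs htwin
  have hlast : ∀ x, (if x = s'.n then some (Fin.last k) else s'.lab x) = some (Fin.last k) ↔
      x = s.n := by
    intro x
    by_cases hx : x = s.n
    · simp [hx, h.n_eq]
    · simp [hx, h.n_eq, h.lab_ne_last]
  have hcs : ∀ x (b : Fin k),
      (if x = s'.n then some (Fin.last k) else s'.lab x) = some b.castSucc ↔
        s.lab x = some b := by
    intro x b
    by_cases hx : x = s.n
    · simp [hx, h.n_eq, hs.lab_eq_none le_rfl, (Fin.castSucc_ne_last b).symm]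
    · simp [hx, h.n_eq, h.lab_eq]
  simp only [insertionBlock, List.foldl_append, List.foldl_cons, List.foldl_nil, foldl_join]
  refine ⟨by simp [LcwState.step, h.n_eq], fun x => ?_, fun x y => ?_⟩
  · simp only [LcwState.step, hlast]
    by_cases hx : x = s.n
    · simp [hx]
    · simp [hx, h.n_eq, h.lab_eq]
  simp only [LcwState.step, hlast, hcs, h.adj_iff, List.mem_filter, List.mem_finRange,
    decide_eq_true_eq, true_and]
  constructor
  · rintro (⟨hx, hy, hne, hxy⟩ | ⟨hne, b, hb, ⟨rfl, hyb⟩ | ⟨hxb, rfl⟩⟩)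
    · exact ⟨by omega, by omega, hne, hxy⟩
    · obtain ⟨hy, hyA⟩ := (hclass y).1 ⟨b, hb, hyb⟩
      exact ⟨by omega, by omega, hne, hA _ _ hyA⟩
    · obtain ⟨hx, hxA⟩ := (hclass x).1 ⟨b, hb, hxb⟩
      exact ⟨by omega, by omega, hne, hxA⟩
  · rintro ⟨hx, hy, hne, hxy⟩
    rcases Nat.lt_succ_iff_lt_or_eq.1 hx with hx | rfl
    · rcases Nat.lt_succ_iff_lt_or_eq.1 hy with hy | rfl
      · exact Or.inl ⟨hx, hy, hne, hxy⟩
      · obtain ⟨b, hb, hxb⟩ := (hclass x).2 ⟨hx, hxy⟩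
        exact Or.inr ⟨hne, b, hb, Or.inr ⟨hxb, rfl⟩⟩
    · obtain ⟨b, hb, hyb⟩ := (hclass y).2 ⟨by omega, hA _ _ hxy⟩
      exact Or.inr ⟨hne, b, hb, Or.inl ⟨rfl, hyb⟩⟩

theorem atInsertions_insertionBlock {P : LcwState (Fin (k + 1)) → Prop}
    {s : LcwState (Fin k)} {s' : LcwState (Fin (k + 1))} (a : Fin k) (h : P s') :
    AtInsertions P (insertionBlock A s a) s' := by
  rw [insertionBlock, List.cons_append]
  exact AtInsertions.cons (fun _ _ => h) (atInsertions_of_forall_ne_insert _ (by simp))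

theorem tracks_toInsertionForm (hA : ∀ x y, A x y → A y x) (e : List (LcwOp (Fin k)))
    {s : LcwState (Fin k)} {s' : LcwState (Fin (k + 1))} (hs : s.WellFormed)
    (hfin : (e.foldl step s).adj = A) (h : Tracks A s s') :
    Tracks A (e.foldl step s) ((toInsertionForm A s e).foldl step s') ∧
      AtInsertions (fun t => ∃ r, Tracks A r t) (toInsertionForm A s e) s' := by
  induction e generalizing s s' with
  | nil => exact ⟨h, atInsertions_of_forall_ne_insert _ (by simp [toInsertionForm])⟩
  | cons op e ih =>
    cases op with
    | insert a =>
      have htwin : ∀ u w, u < s.n → w < s.n → s.lab u = s.lab w → A u s.n → A w s.n := by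
        intro u w hu hw hl huA
        rw [← hfin] at huA ⊢
        exact (foldl_adj_iff_of_lab_eq hs _ hu hw hl).1 huA
      obtain ⟨h₁, h₂⟩ := ih (hs.step _) hfin (h.step_insertionBlock hs hA htwin a)
      simp only [toInsertionForm, List.foldl_append]
      exact ⟨h₁, (atInsertions_insertionBlock a ⟨s, h⟩).append h₂⟩
    | join i j => exact ih (hs.step _) hfin ⟨h.n_eq, h.lab_eq, h.adj_iff⟩
    | relabel i j =>
      obtain ⟨h₁, h₂⟩ := ih (hs.step _) hfin (h.step_relabel i j)
      exact ⟨h₁, h₂.cons (fun _ h => by cases h)⟩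

theorem mem_toInsertionForm {op : LcwOp (Fin (k + 1))} (e : List (LcwOp (Fin k)))
    {s : LcwState (Fin k)} (hop : op ∈ toInsertionForm A s e) :
    op = .insert (Fin.last k) ∨ (∃ b : Fin k, op = .join (Fin.last k) b.castSucc) ∨
      ∃ i j, op = .relabel i j := by
  induction e generalizing s with
  | nil => simp [toInsertionForm] at hop
  | cons op' e ih =>
    cases op' with
    | insert a =>
      simp only [toInsertionForm, insertionBlock, List.mem_append, List.mem_cons, List.mem_map,
        List.not_mem_nil, or_false] at hop
      rcases hop with ((rfl | ⟨b, -, rfl⟩) | rfl) | hop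
      · exact Or.inl rfl
      · exact Or.inr (Or.inl ⟨b, rfl⟩)
      · exact Or.inr (Or.inr ⟨_, _, rfl⟩)
      · exact ih hop
    | join i j => exact ih hop
    | relabel i j =>
      rcases List.mem_cons.1 hop with rfl | hop
      · exact Or.inr (Or.inr ⟨_, _, rfl⟩)
      · exact ih hop

theorem wfExpr_toInsertionForm (s : LcwState (Fin k)) (e : List (LcwOp (Fin k))) :
    WfExpr (toInsertionForm A s e) := by
  rintro op hop i j rfl
  rcases mem_toInsertionForm _ hop with h | ⟨b, h⟩ | ⟨_, _, h⟩ <;> cases h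
  exact (Fin.castSucc_ne_last b).symm

theorem eq_last_of_insert_mem_toInsertionForm {s : LcwState (Fin k)}
    {e : List (LcwOp (Fin k))} {a : Fin (k + 1)} (h : .insert a ∈ toInsertionForm A s e) :
    a = Fin.last k := by
  rcases mem_toInsertionForm _ h with h | ⟨b, h⟩ | ⟨_, _, h⟩ <;> cases h
  rfl

end InsertionForm

/-- every finite graph `G` has an lcw expression over
`lcw G + 1` labels with a reserved insertion label `ℓ`: every vertex is
inserted with label `ℓ` (and no other vertex carries `ℓ` at that moment), and
before any further vertex is inserted (and at the end of the expression) all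
edges among the already-inserted vertices have been completed. -/
theorem statement_2 {V : Type} [Fintype V] (G : SimpleGraph V) :
    ∃ (e : List (LcwOp (Fin (lcw G + 1)))) (f : V → ℕ) (ℓ : Fin (lcw G + 1)),
      BuildsVia e G f ∧
      (∀ op ∈ e, ∀ a, op = LcwOp.insert a → a = ℓ) ∧
      (∀ t : ℕ, (t = e.length ∨ ∃ a, e[t]? = some (LcwOp.insert a)) →
        (∀ v : ℕ, (runLcw (e.take t)).lab v ≠ some ℓ) ∧
        (∀ u v : ℕ, u < (runLcw (e.take t)).n → v < (runLcw (e.take t)).n →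
          ((runLcw (e.take t)).adj u v ↔ (runLcw e).adj u v))) := by
  obtain ⟨e₀, f, -, hf, hcard, hlt, hG⟩ : ∃ e₀ : List (LcwOp (Fin (lcw G))), Builds e₀ G :=
    Nat.sInf_mem (s := {k | ∃ e : List (LcwOp (Fin k)), Builds e G}) ⟨_, exists_builds_card G⟩
  set A := (runLcw e₀).adj
  set e := toInsertionForm A (LcwState.init _) e₀
  obtain ⟨hfin, hins⟩ : Tracks A (runLcw e₀) (runLcw e) ∧
      AtInsertions (fun t => ∃ r, Tracks A r t) e (LcwState.init _) :=
    tracks_toInsertionForm (fun _ _ => (LcwState.wellFormed_runLcw e₀).adj_symm) e₀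
      LcwState.wellFormed_init rfl tracks_init
  have htake : ∀ t, (t = e.length ∨ ∃ a, e[t]? = some (.insert a)) →
      ∃ r, Tracks A r (runLcw (e.take t)) := by
    rintro t (rfl | ⟨a, ha⟩)
    · exact ⟨_, by simpa using hfin⟩
    · exact hins t a ha
  refine ⟨e, f, Fin.last _, ⟨wfExpr_toInsertionForm _ _, hf, hfin.n_eq.trans hcard,
    fun v => hfin.n_eq ▸ hlt v, fun u v => ?_⟩,
    fun op hop a h => eq_last_of_insert_mem_toInsertionForm (h ▸ hop), fun t ht => ?_⟩
  · rw [hG, hfin.adj_iff]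
    exact ⟨fun h => ⟨hlt u, hlt v, fun huv => (hG u v).2 h |>.ne (hf huv), h⟩,
      fun h => h.2.2.2⟩
  · obtain ⟨r, hr⟩ := htake t ht
    exact ⟨hr.lab_ne_last, fun u v hu hv =>
      hr.adj_iff_adj hfin (LcwState.n_runLcw_take_le e t) hu hv⟩
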